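/- The Half-Cauchy(A) prior arises as a scale mixture: if a has the Inverse-Chi-Squared distribution with 1 degree of freedom and scale 1/A^2 (density proportional to a^{-3/2} exp(-1/(2 A^2 a))), and conditionally on a, sigma^2 has the Inverse-Chi-Squared distribution with 1 degree of freedom and scale 1/a (density proportional to (sigma^2)^{-3/2} exp(-1/(2 a sigma^2))), then the marginal distribution of sigma = sqrt(sigma^2) has density p(sigma) = 2 / (A pi (1 + (sigma/A)^2)) for sigma > 0, i.e., sigma is Half-Cauchy(A). -/

import Mathlib

/-!
As a function of `a`, the product of the two Inverse-χ²(1) densities is, up to the constant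
`σ⁻³ / (2πA)`, the unnormalised inverse-gamma kernel `a⁻² exp (-b / a)` with
`b = 1 / (2σ²) + 1 / (2A²)`. Substituting `t = 1 / a` turns its integral into Euler's integral
for `Γ(1)`, so it equals `1 / b = 2σ²A² / (σ² + A²)`, and the Jacobian factor `2σ` then
produces the Half-Cauchy(A) density.
-/

open Real MeasureTheory Set

theorem integral_rpow_neg_mul_exp_neg_div_Ioi {s b : ℝ} (hs : 0 < s) (hb : 0 < b) :
    ∫ a in Ioi 0, a ^ (-(s + 1)) * exp (-(b / a)) = (1 / b) ^ s * Gamma s := by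
  rw [← integral_rpow_mul_exp_neg_mul_Ioi hs hb,
    ← integral_comp_rpow_Ioi (fun t ↦ t ^ (s - 1) * exp (-(b * t))) (neg_ne_zero.2 one_ne_zero)]
  refine setIntegral_congr_fun measurableSet_Ioi fun a (ha : 0 < a) ↦ ?_
  have hpow : a ^ (-1 - 1 : ℝ) * (a ^ (-1 : ℝ)) ^ (s - 1) = a ^ (-(s + 1)) := by
    rw [← rpow_mul ha.le, ← rpow_add ha]
    ring_nf
  simp only [smul_eq_mul, abs_neg, abs_one, one_mul, ← mul_assoc, hpow]
  rw [rpow_neg_one, div_eq_mul_inv]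

theorem invChiSq_joint_density_eq_rpow_mul_exp (A σ : ℝ) {a : ℝ} (ha : 0 < a) :
    ((1 / √(2 * π * a)) * (σ ^ 2) ^ (-(3:ℝ)/2) * exp (-1 / (2 * a * σ ^ 2))) *
        ((1 / (A * √(2 * π))) * a ^ (-(3:ℝ)/2) * exp (-1 / (2 * A ^ 2 * a)))
      = (σ ^ 2) ^ (-(3:ℝ)/2) / (2 * π * A) *
          (a ^ (-(1 + 1 : ℝ)) * exp (-((1 / (2 * σ ^ 2) + 1 / (2 * A ^ 2)) / a))) := by
  have hsqrt : √(2 * π * a) * √(2 * π) = 2 * π * a ^ (1 / 2 : ℝ) := by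
    rw [mul_comm, ← sqrt_mul (by positivity), ← mul_assoc, sqrt_mul (by positivity),
      sqrt_mul_self (by positivity), sqrt_eq_rpow]
  have hpow : a ^ (-(3:ℝ)/2) = a ^ (1 / 2 : ℝ) * a ^ (-(1 + 1 : ℝ)) := by
    rw [← rpow_add ha]
    norm_num
  have hexp : exp (-1 / (2 * a * σ ^ 2)) * exp (-1 / (2 * A ^ 2 * a))
      = exp (-((1 / (2 * σ ^ 2) + 1 / (2 * A ^ 2)) / a)) := by
    rw [← exp_add]
    ring_nf
  have : a ^ (1 / 2 : ℝ) ≠ 0 := by positivity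
  rw [hpow, ← hexp]
  field_simp
  linear_combination (-(σ ^ 2) ^ (-(3 / 2) : ℝ) / A) * hsqrt

theorem halfCauchy_as_inverse_chisq_mixture_general (A : ℝ) (σ : ℝ) (hσ : 0 < σ) :
    2 * σ * ∫ a in Set.Ioi (0:ℝ),
        ((1 / Real.sqrt (2 * Real.pi * a)) * (σ ^ 2) ^ (-(3:ℝ)/2) *
          Real.exp (-1 / (2 * a * σ ^ 2))) *
        ((1 / (A * Real.sqrt (2 * Real.pi))) * a ^ (-(3:ℝ)/2) *
          Real.exp (-1 / (2 * A ^ 2 * a)))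
      = 2 / (A * Real.pi * (1 + (σ / A) ^ 2)) := by
  rw [setIntegral_congr_fun measurableSet_Ioi fun a (ha : 0 < a) ↦
      invChiSq_joint_density_eq_rpow_mul_exp A σ ha, integral_const_mul,
    integral_rpow_neg_mul_exp_neg_div_Ioi one_pos (by positivity), Gamma_one, rpow_one, mul_one]
  have hσ3 : (σ ^ 2) ^ (-(3:ℝ)/2) = (σ ^ 3)⁻¹ := by
    rw [← rpow_natCast σ 2, ← rpow_mul hσ.le, ← rpow_natCast σ 3, ← rpow_neg hσ.le]
    norm_num
  rw [hσ3]
  field_simp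

/-- The Half-Cauchy(A) prior as a scale mixture of Inverse-χ² distributions:
if `a ~ Inverse-χ²(1, 1/A²)` and `σ² | a ~ Inverse-χ²(1, 1/a)`, then the
marginal density of `σ` (obtained by integrating out `a` and changing variables
`σ = √(σ²)`, which multiplies the density of `σ²` at `σ²` by `2σ`) is the
Half-Cauchy(A) density `2 / (A π (1 + (σ/A)²))`. -/
theorem halfCauchy_as_inverse_chisq_mixture (A : ℝ) (hA : 0 < A) (σ : ℝ) (hσ : 0 < σ) :
    2 * σ * ∫ a in Set.Ioi (0:ℝ),
        ((1 / Real.sqrt (2 * Real.pi * a)) * (σ ^ 2) ^ (-(3:ℝ)/2) *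
          Real.exp (-1 / (2 * a * σ ^ 2))) *
        ((1 / (A * Real.sqrt (2 * Real.pi))) * a ^ (-(3:ℝ)/2) *
          Real.exp (-1 / (2 * A ^ 2 * a)))
      = 2 / (A * Real.pi * (1 + (σ / A) ^ 2)) :=
  halfCauchy_as_inverse_chisq_mixture_general A σ hσ
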